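/- arXiv:2506.06101 — 3 statements merged into one kernel-verified Lean document; each statement's English description precedes it below -/
import Mathlib

section
/- For every prime ell >= 5, the falling factorial (ell-3)(ell-4)···((ell-3)-(ell-3)/2+1) (i.e., (ell-3) falling (ell-3)/2) is congruent to (-1)^((ell-3)/2) * ((ell+1)/2)! * inverse(2) modulo ell. -/
lemma prod_neg_aux {R : Type*} [CommRing R] (n : ℕ) (f : ℕ → R) :
    ∏ i ∈ Finset.range n, (-(f i)) = (-1) ^ n * ∏ i ∈ Finset.range n, f i := by
  induction n with
  | zero => simp
  | succ k ih => rw [Finset.prod_range_succ, Finset.prod_range_succ, ih, pow_succ]; ring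

lemma fact_aux (m : ℕ) :
    Nat.factorial (m + 2) = 2 * ∏ i ∈ Finset.range m, (i + 3) := by
  induction m with
  | zero => simp [Nat.factorial]
  | succ n ih =>
      rw [Finset.prod_range_succ, show n + 1 + 2 = (n + 2) + 1 from rfl,
        Nat.factorial_succ, ih]
      ring

theorem descFactorial_congr (ℓ : ℕ) (hp : ℓ.Prime) (h5 : 5 ≤ ℓ) :
    ((Nat.descFactorial (ℓ - 3) ((ℓ - 3) / 2) : ZMod ℓ))
      = (-1) ^ ((ℓ - 3) / 2) * (Nat.factorial ((ℓ + 1) / 2) : ZMod ℓ) * (2 : ZMod ℓ)⁻¹ := by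
  have hodd : ℓ % 2 = 1 := by
    rcases Nat.Prime.eq_two_or_odd hp with h | h
    · omega
    · exact h
  set m := (ℓ - 3) / 2 with hm
  have hℓ : ℓ = 2 * m + 3 := by omega
  have h1 : (ℓ + 1) / 2 = m + 2 := by omega
  have h3 : ℓ - 3 = 2 * m := by omega
  have hcharp : Fact ℓ.Prime := ⟨hp⟩
  have h2ne : (2 : ZMod ℓ) ≠ 0 := by
    intro h
    have h' : ((2 : ℕ) : ZMod ℓ) = 0 := by exact_mod_cast h
    have : (ℓ : ℕ) ∣ 2 := (ZMod.natCast_eq_zero_iff 2 ℓ).mp h'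
    have := Nat.le_of_dvd (by norm_num) this
    omega
  rw [h1, h3, Nat.descFactorial_eq_prod_range]
  push_cast
  have hcast : ∀ i ∈ Finset.range m, ((2 * m - i : ℕ) : ZMod ℓ) = -((i : ZMod ℓ) + 3) := by
    intro i hi
    simp only [Finset.mem_range] at hi
    have : ((2 * m - i : ℕ) : ZMod ℓ) = ((2 * m : ℕ) : ZMod ℓ) - (i : ZMod ℓ) := by
      rw [Nat.cast_sub (by omega)]
    rw [this]
    have hℓ0 : ((ℓ : ℕ) : ZMod ℓ) = 0 := ZMod.natCast_self ℓ
    have h2m : ((2 * m + 3 : ℕ) : ZMod ℓ) = 0 := by rw [← hℓ]; exact hℓ0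
    push_cast at h2m
    push_cast
    linear_combination h2m
  rw [Finset.prod_congr rfl hcast]
  have hprodeq : ∏ i ∈ Finset.range m, (-((i : ZMod ℓ) + 3))
      = (-1) ^ m * ∏ i ∈ Finset.range m, ((i : ZMod ℓ) + 3) := by
    exact prod_neg_aux m _
  rw [hprodeq]
  have hfact : ((Nat.factorial (m + 2) : ℕ) : ZMod ℓ)
      = 2 * ∏ i ∈ Finset.range m, ((i : ZMod ℓ) + 3) := by
    rw [fact_aux]
    push_cast
    ring
  field_simp
  rw [hfact]
  ring
end

section
/- For every prime ell >= 5, we have -6 * ((ell-3) falling (ell-3)/2)^2 ≡ -3 * inverse(2) * ((ell+1)/2)!^2 modulo ell. -/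
lemma two_mul_prod_range_add_three (m : ℕ) :
    2 * ∏ i ∈ Finset.range m, (i + 3) = (m + 2).factorial := by
  induction m with
  | zero => simp [Nat.factorial]
  | succ n ih =>
    rw [Finset.prod_range_succ, show n + 1 + 2 = (n + 2) + 1 from rfl,
      Nat.factorial_succ, ← ih]
    ring

theorem descFactorial_sq_congr (ℓ : ℕ) (hp : ℓ.Prime) (h5 : 5 ≤ ℓ) :
    (-6 : ZMod ℓ) * ((Nat.descFactorial (ℓ - 3) ((ℓ - 3) / 2) : ZMod ℓ)) ^ 2
      = -3 * (2 : ZMod ℓ)⁻¹ * ((Nat.factorial ((ℓ + 1) / 2) : ZMod ℓ)) ^ 2 := by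
  haveI : Fact ℓ.Prime := ⟨hp⟩
  obtain ⟨k, hk⟩ := hp.odd_of_ne_two (by omega)
  have hk2 : 2 ≤ k := by omega
  have hm : (ℓ - 3) / 2 = k - 1 := by omega
  have hm2 : (ℓ + 1) / 2 = k + 1 := by omega
  rw [hm, hm2]
  -- cast of descFactorial
  have hD : ((Nat.descFactorial (ℓ - 3) (k - 1) : ℕ) : ZMod ℓ)
      = (-1) ^ (k - 1) * ((∏ i ∈ Finset.range (k - 1), (i + 3) : ℕ) : ZMod ℓ) := by
    rw [Nat.descFactorial_eq_prod_range, Nat.cast_prod, Nat.cast_prod]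
    have hfac : ∀ i ∈ Finset.range (k - 1),
        ((ℓ - 3 - i : ℕ) : ZMod ℓ) = (-1) * ((i + 3 : ℕ) : ZMod ℓ) := by
      intro i hi
      have hi' : i < k - 1 := Finset.mem_range.mp hi
      have hle : i + 3 ≤ ℓ := by omega
      have : ℓ - 3 - i = ℓ - (i + 3) := by omega
      rw [this, Nat.cast_sub hle, ZMod.natCast_self]
      push_cast
      ring
    rw [Finset.prod_congr rfl hfac, Finset.prod_mul_distrib,
      Finset.prod_const, Finset.card_range]
  have hP : ((2 : ℕ) : ZMod ℓ) * ((∏ i ∈ Finset.range (k - 1), (i + 3) : ℕ) : ZMod ℓ)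
      = ((Nat.factorial (k + 1) : ℕ) : ZMod ℓ) := by
    rw [← Nat.cast_mul, two_mul_prod_range_add_three, show k - 1 + 2 = k + 1 by omega]
  have key : (4 : ZMod ℓ) * ((Nat.descFactorial (ℓ - 3) (k - 1) : ℕ) : ZMod ℓ) ^ 2
      = ((Nat.factorial (k + 1) : ℕ) : ZMod ℓ) ^ 2 := by
    rw [hD, ← hP]
    rw [mul_pow, mul_pow, ← pow_mul]
    have : (-1 : ZMod ℓ) ^ ((k - 1) * 2) = 1 := by
      rw [mul_comm, pow_mul]
      norm_num
    rw [this]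
    push_cast
    ring
  have h2 : (2 : ZMod ℓ) ≠ 0 := by
    have : ((2 : ℕ) : ZMod ℓ) ≠ 0 := by
      rw [Ne, ZMod.natCast_eq_zero_iff]
      intro h
      have := Nat.le_of_dvd (by norm_num) h
      omega
    simpa using this
  rw [← key]
  field_simp
  ring
end

section
/- The formal power series identity sum over integers n of (-1)^n q^((3n^2+n)/2) = product over n >= 1 of (1 - q^n) holds in Z[[q]]. -/
/-!
Mathlib's `PowerSeries.coeff_prod_one_sub_X_pow_eventually_eq` identifies the coefficients of all
sufficiently large partial products of `∏ (1 - X^(i+1))` with those of `pentagonalSeries`. The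
factors with `i ≥ N` are `≡ 1 mod X^(N+1)`, so the `N`-th coefficient is already that of the
partial product over `range (N + 1)`. Mathlib's `pentagonal k = k(3k - 1)/2` runs the other way
round, `pent m = pentagonal (-m)`, so the coefficients of `pentagonalSeries` are the finite sums
over `{m | pent m = N}`.
-/

/-- The `m`-th generalized pentagonal number `ω(m) = (3m² + m)/2`. -/
def pent (m : ℤ) : ℤ := (3 * m ^ 2 + m) / 2

open PowerSeries Finset

theorem pent_eq_pentagonal_neg (m : ℤ) : pent m = pentagonal (-m) := by
  rw [natCast_pentagonal, pent]
  ring_nf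

theorem negOnePow_neg_eq_pow_natAbs (m : ℤ) : ((-m).negOnePow : ℤ) = (-1) ^ m.natAbs := by
  rw [Int.negOnePow_neg, ← Int.negOnePow_abs, ← Int.natCast_natAbs, Int.coe_negOnePow_natCast]

theorem coeff_pentagonalSeries_int_eq_finsum_pent (N : ℕ) :
    (pentagonalSeries ℤ).coeff N = ∑ᶠ m ∈ {m : ℤ | pent m = (N : ℤ)}, (-1 : ℤ) ^ m.natAbs := by
  simp_rw [pent_eq_pentagonal_neg, Nat.cast_inj]
  by_cases hN : N ∈ Set.range pentagonal
  · obtain ⟨k, rfl⟩ := hN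
    have hk : {m : ℤ | pentagonal (-m) = pentagonal k} = {-k} := by
      ext m
      simp [neg_eq_iff_eq_neg]
    rw [hk, finsum_mem_singleton, coeff_pentagonalSeries_pentagonal,
      ← negOnePow_neg_eq_pow_natAbs, neg_neg, Int.cast_id]
  · have hempty : {m : ℤ | pentagonal (-m) = N} = ∅ :=
      Set.eq_empty_of_forall_notMem fun m hm => hN ⟨-m, hm⟩
    rw [hempty, finsum_mem_empty, coeff_pentagonalSeries_eq_zero ℤ hN]

theorem dvd_prod_sub_one {R ι : Type*} [CommRing R] {a : R} {s : Finset ι} {f : ι → R}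
    (hf : ∀ i ∈ s, a ∣ f i - 1) : a ∣ ∏ i ∈ s, f i - 1 :=
  prod_induction f (fun g => a ∣ g - 1)
    (fun g h hg hh => by
      rw [show g * h - 1 = g * (h - 1) + (g - 1) by ring]
      exact dvd_add (dvd_mul_of_dvd_right hh g) hg)
    (by simp) hf

theorem X_pow_dvd_prod_one_sub_X_pow_sub_one {R : Type*} [CommRing R] {n : ℕ} {s : Finset ℕ}
    (hs : ∀ i ∈ s, n ≤ i) : X ^ (n + 1) ∣ ∏ i ∈ s, (1 - X ^ (i + 1) : R⟦X⟧) - 1 :=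
  dvd_prod_sub_one fun i hi => by
    simpa using (pow_dvd_pow X (Nat.succ_le_succ (hs i hi))).neg_right

theorem coeff_mul_of_X_pow_dvd_sub_one {R : Type*} [CommRing R] {f g : R⟦X⟧} {n : ℕ}
    (hg : X ^ (n + 1) ∣ g - 1) : (f * g).coeff n = f.coeff n := by
  have hdiff : X ^ (n + 1) ∣ f * g - f := by
    simpa [mul_sub] using dvd_mul_of_dvd_right hg f
  rw [← sub_eq_zero, ← map_sub]
  exact X_pow_dvd_iff.1 hdiff n n.lt_succ_self

theorem coeff_prod_one_sub_X_pow_of_range_subset {R : Type*} [CommRing R] {n : ℕ}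
    {s : Finset ℕ} (hs : range (n + 1) ⊆ s) :
    (∏ i ∈ s, (1 - X ^ (i + 1) : R⟦X⟧)).coeff n =
      (∏ i ∈ range (n + 1), (1 - X ^ (i + 1) : R⟦X⟧)).coeff n := by
  rw [← prod_sdiff hs, mul_comm]
  refine coeff_mul_of_X_pow_dvd_sub_one (X_pow_dvd_prod_one_sub_X_pow_sub_one fun i hi => ?_)
  exact (by simpa using (mem_sdiff.1 hi).2 : n < i).le

theorem coeff_prod_range_one_sub_X_pow (R : Type*) [CommRing R] (n : ℕ) :
    (∏ i ∈ range (n + 1), (1 - X ^ (i + 1) : R⟦X⟧)).coeff n = (pentagonalSeries R).coeff n := by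
  obtain ⟨s, hs⟩ := Filter.eventually_atTop.1 (coeff_prod_one_sub_X_pow_eventually_eq R n)
  rw [← coeff_prod_one_sub_X_pow_of_range_subset subset_union_right, hs _ subset_union_left]

/-- Euler's pentagonal number theorem in `ℤ[[q]]`, stated coefficient-wise: the `N`-th
coefficient of `∏_{n ≥ 1} (1 - q^n)` (only factors with `n ≤ N + 1` contribute) equals
the sum of `(-1)^m` over all integers `m` with `(3m² + m)/2 = N`. -/
theorem pentagonal_number_theorem (N : ℕ) :
    (PowerSeries.coeff (R := ℤ) N)
        (∏ n ∈ Finset.range (N + 1), (1 - PowerSeries.X ^ (n + 1)))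
      = ∑ᶠ m ∈ {m : ℤ | pent m = (N : ℤ)}, (-1 : ℤ) ^ m.natAbs := by
  rw [coeff_prod_range_one_sub_X_pow, coeff_pentagonalSeries_int_eq_finsum_pent]
end
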